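/- arXiv:2002.04756 — 3 statements merged into one kernel-verified Lean document; each statement's English description precedes it below -/
import Mathlib

section
/- Let H ∈ ℝ^{d×d} be symmetric with eigenvalues λ_1, …, λ_d (counted with multiplicity), x⋆ ∈ ℝ^d, f(x) = ½(x−x⋆)ᵀH(x−x⋆), P a real polynomial, R ≥ 0, and v : Ω → ℝ^d a square-integrable random vector on a probability space Ω with E[v vᵀ] = R² I. If x_t = x⋆ + P(H)v, then E[f(x_t) − f(x⋆)] = (R²/2) ∑_{i=1}^d λ_i P(λ_i)². -/
/-!
With `M = P(H)`, which is symmetric, `f(x_t) - f(x⋆) = ½ vᵀ (M H M) v` and `M H M = (P · X · P)(H)`.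
Isotropy of `v` turns the expectation of a quadratic form `vᵀ A v` into `R² tr A`, and the trace of
a polynomial in a Hermitian matrix is the sum of its values at the eigenvalues, by the spectral
theorem.
-/

open Matrix Polynomial MeasureTheory

namespace Matrix.IsHermitian

variable {𝕜 n : Type*} [RCLike 𝕜] [Fintype n] [DecidableEq n] {A : Matrix n n 𝕜}

theorem trace_cfc (hA : A.IsHermitian) (f : ℝ → ℝ) :
    (cfc f A).trace = ∑ i, (f (hA.eigenvalues i) : 𝕜) := by
  rw [hA.cfc_eq, IsHermitian.cfc, Unitary.conjStarAlgAut_apply, trace_mul_cycle,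
    Unitary.coe_star_mul_self, one_mul, trace_diagonal]
  rfl

theorem trace_aeval (hA : A.IsHermitian) (q : ℝ[X]) :
    (aeval A q).trace = ∑ i, ((q.eval (hA.eigenvalues i) : ℝ) : 𝕜) := by
  rw [← cfc_polynomial q A hA.isSelfAdjoint, hA.trace_cfc]

theorem isSelfAdjoint_aeval (hA : A.IsHermitian) (q : ℝ[X]) : IsSelfAdjoint (aeval A q) := by
  rw [← cfc_polynomial q A hA.isSelfAdjoint]
  exact cfc_predicate _ _

end Matrix.IsHermitian

theorem Matrix.mulVec_dotProduct_mulVec_mulVec {n R : Type*} [Fintype n] [CommSemiring R]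
    (M A : Matrix n n R) (v : n → R) :
    (M *ᵥ v) ⬝ᵥ (A *ᵥ (M *ᵥ v)) = v ⬝ᵥ ((Mᵀ * A * M) *ᵥ v) := by
  rw [← mulVec_mulVec, ← mulVec_mulVec, dotProduct_mulVec v, vecMul_transpose]

theorem integral_dotProduct_mulVec_of_integral_mul_eq {Ω ι : Type*} [MeasurableSpace Ω]
    {μ : Measure Ω} [Fintype ι] [DecidableEq ι] (A : Matrix ι ι ℝ) (v : Ω → ι → ℝ)
    (hv : ∀ i, MemLp (fun ω => v ω i) 2 μ) (c : ℝ)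
    (hcov : ∀ i j, ∫ ω, v ω i * v ω j ∂μ = c * (1 : Matrix ι ι ℝ) i j) :
    ∫ ω, v ω ⬝ᵥ (A *ᵥ v ω) ∂μ = c * A.trace := by
  have hint : ∀ i j, Integrable (fun ω => A i j * (v ω i * v ω j)) μ := fun i j =>
    ((hv i).integrable_mul (hv j)).const_mul _
  have hexpand : ∀ ω, v ω ⬝ᵥ (A *ᵥ v ω) = ∑ i, ∑ j, A i j * (v ω i * v ω j) := fun ω => by
    simp only [dotProduct, mulVec, Finset.mul_sum]
    exact Finset.sum_congr rfl fun i _ => Finset.sum_congr rfl fun j _ => by ring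
  simp_rw [hexpand]
  rw [integral_finsetSum _ fun i _ => integrable_finsetSum _ fun j _ => hint i j]
  simp_rw [integral_finsetSum _ fun j _ => hint _ j, integral_const_mul, hcov]
  simp [one_apply, trace, Finset.mul_sum, mul_comm]

theorem expected_function_suboptimality_general
    {Ω : Type*} [MeasureSpace Ω]
    (d : ℕ) (H : Matrix (Fin d) (Fin d) ℝ) (hH : H.IsHermitian)
    (xstar : Fin d → ℝ)
    (f : (Fin d → ℝ) → ℝ)
    (hf : ∀ y, f y = (1 / 2) * ((y - xstar) ⬝ᵥ (H *ᵥ (y - xstar))))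
    (P : Polynomial ℝ) (R : ℝ)
    (v : Ω → Fin d → ℝ)
    (hv : ∀ i, MemLp (fun ω => v ω i) 2 (volume : Measure Ω))
    (hcov : ∀ i j, (∫ ω, v ω i * v ω j) = R ^ 2 * (1 : Matrix (Fin d) (Fin d) ℝ) i j)
    (xt : Ω → Fin d → ℝ) (hxt : ∀ ω, xt ω = xstar + (aeval H P) *ᵥ (v ω)) :
    (∫ ω, (f (xt ω) - f xstar)) =
      R ^ 2 / 2 * ∑ i, hH.eigenvalues i * P.eval (hH.eigenvalues i) ^ 2 := by
  have hsymm : (aeval H P)ᵀ = aeval H P := IsSymm.eq (hH.isSelfAdjoint_aeval P)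
  have hgap : ∀ ω, f (xt ω) - f xstar = 1 / 2 * (v ω ⬝ᵥ (aeval H (P * X * P) *ᵥ v ω)) := by
    intro ω
    rw [hf, hf, hxt, add_sub_cancel_left, sub_self, mulVec_zero, dotProduct_zero, mul_zero,
      sub_zero, mulVec_dotProduct_mulVec_mulVec, hsymm, map_mul, map_mul, aeval_X]
  simp_rw [hgap]
  rw [integral_const_mul, integral_dotProduct_mulVec_of_integral_mul_eq _ v hv _ hcov,
    hH.trace_aeval, Finset.mul_sum, Finset.mul_sum, Finset.mul_sum]
  refine Finset.sum_congr rfl fun i _ => ?_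
  simp only [eval_mul, eval_X, RCLike.ofReal_real_eq_id, id]
  ring

/-- Let `H` be a real symmetric `d × d` matrix with eigenvalues `λ_1, …, λ_d`,
`f(x) = ½(x−x⋆)ᵀH(x−x⋆)`, `P` a real polynomial, `R ≥ 0`, and `v` a
square-integrable random vector with `E[v vᵀ] = R² I`. If `x_t = x⋆ + P(H)v`,
then `E[f(x_t) − f(x⋆)] = (R²/2) ∑_i λ_i P(λ_i)²`. -/
theorem expected_function_suboptimality
    {Ω : Type*} [MeasureSpace Ω] [IsProbabilityMeasure (volume : Measure Ω)]
    (d : ℕ) (H : Matrix (Fin d) (Fin d) ℝ) (hH : H.IsHermitian)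
    (xstar : Fin d → ℝ)
    (f : (Fin d → ℝ) → ℝ)
    (hf : ∀ y, f y = (1 / 2) * ((y - xstar) ⬝ᵥ (H *ᵥ (y - xstar))))
    (P : Polynomial ℝ) (R : ℝ) (hR : 0 ≤ R)
    (v : Ω → Fin d → ℝ)
    (hv : ∀ i, MemLp (fun ω => v ω i) 2 (volume : Measure Ω))
    (hcov : ∀ i j, (∫ ω, v ω i * v ω j) = R ^ 2 * (1 : Matrix (Fin d) (Fin d) ℝ) i j)
    (xt : Ω → Fin d → ℝ) (hxt : ∀ ω, xt ω = xstar + (aeval H P) *ᵥ (v ω)) :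
    (∫ ω, (f (xt ω) - f xstar)) =
      R ^ 2 / 2 * ∑ i, hH.eigenvalues i * P.eval (hH.eigenvalues i) ^ 2 :=
  expected_function_suboptimality_general d H hH xstar f hf P R v hv hcov xt hxt
end

section
/- Let μ be a nonnegative measure on ℝ with finite moments up to order 2t + 1, and let P be a real polynomial with deg P ≤ t and P(0) = 1 such that ∫ Q(λ) P(λ) λ dμ(λ) = 0 for every real polynomial Q with deg Q ≤ t − 1. Then ∫ P² dμ = ∫ P dμ. -/
open Polynomial MeasureTheory

/-- Let `μ` be a nonnegative measure on `ℝ` with finite moments up to order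
`2t + 1`, and let `P` be a residual polynomial of degree at most `t`
(`P(0) = 1`) that is orthogonal, with respect to the weight `λ dμ(λ)`, to all
polynomials of degree `< t`. Then `∫ P² dμ = ∫ P dμ`. -/
theorem residual_orthogonal_sq_integral_eq_integral
    (μ : Measure ℝ) (t : ℕ)
    (hmom : ∀ k ≤ 2 * t + 1, Integrable (fun x => x ^ k) μ)
    (P : Polynomial ℝ) (hdeg : P.natDegree ≤ t) (hres : P.eval 0 = 1)
    (horth : ∀ Q : Polynomial ℝ, Q.degree < t →
      (∫ x, Q.eval x * P.eval x * x ∂μ) = 0) :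
    (∫ x, (P.eval x) ^ 2 ∂μ) = ∫ x, P.eval x ∂μ := by
  have key : ∀ R : Polynomial ℝ, R.natDegree ≤ 2 * t + 1 →
      Integrable (fun x => R.eval x) μ := by
    intro R hR
    have h : (fun x => R.eval x)
        = fun x => ∑ k ∈ Finset.range (2 * t + 2), R.coeff k * x ^ k := by
      funext x
      exact Polynomial.eval_eq_sum_range' (lt_of_le_of_lt hR (by omega)) x
    rw [h]
    exact integrable_finset_sum _ fun k hk =>
      (hmom k (by have := Finset.mem_range.mp hk; omega)).const_mul _
  set Q : Polynomial ℝ := (P - 1).divX with hQ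
  have hPQ : P - 1 = Polynomial.X * Q := by
    have h0 : (P - 1).coeff 0 = 0 := by
      simp [Polynomial.coeff_zero_eq_eval_zero, hres]
    have := Polynomial.X_mul_divX_add (P - 1)
    rw [h0] at this
    simpa using this.symm
  have hQdeg : Q.degree < (t : ℕ) := by
    by_cases h : P - 1 = 0
    · simp [hQ, h]
    · have h1 : (P - 1).degree ≤ (t : ℕ) := by
        refine le_trans (Polynomial.degree_sub_le _ _) ?_
        simp only [max_le_iff]
        constructor
        · exact le_trans (Polynomial.degree_le_natDegree) (by exact_mod_cast hdeg)
        · exact le_trans Polynomial.degree_one_le (by exact_mod_cast Nat.zero_le t)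
      exact lt_of_lt_of_le (Polynomial.degree_divX_lt h) h1
  have hPint : Integrable (fun x => P.eval x) μ := key P (by omega)
  have hP2int : Integrable (fun x => (P.eval x) ^ 2) μ := by
    have := key (P ^ 2) (by
      rw [Polynomial.natDegree_pow]; omega)
    simpa [Polynomial.eval_pow] using this
  have horthQ := horth Q hQdeg
  have hptwise : ∀ x : ℝ, (P.eval x) ^ 2 - P.eval x = Q.eval x * P.eval x * x := by
    intro x
    have := congrArg (fun p => Polynomial.eval x p) hPQ
    simp only [Polynomial.eval_sub, Polynomial.eval_one, Polynomial.eval_mul,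
      Polynomial.eval_X] at this
    calc (P.eval x) ^ 2 - P.eval x = P.eval x * (P.eval x - 1) := by ring
      _ = P.eval x * (x * Q.eval x) := by rw [show P.eval x - 1 = x * Q.eval x from this]
      _ = Q.eval x * P.eval x * x := by ring
  have hsub : (∫ x, (P.eval x) ^ 2 ∂μ) - (∫ x, P.eval x ∂μ)
      = ∫ x, Q.eval x * P.eval x * x ∂μ := by
    rw [← integral_sub hP2int hPint]
    exact integral_congr_ae (Filter.Eventually.of_forall fun x => hptwise x)
  rw [horthQ] at hsub
  linarith [hsub]
end

section
/- Let r > 0 and set c = (1 + r)/√r. Define δ_0 = 0 and δ_t = −1/(c + δ_{t−1}) for t ≥ 1. Then: (i) the equation δ = −1/(c + δ) has exactly the solutions δ = −√r and δ = −1/√r; (ii) the sequence (δ_t) is well defined (c + δ_{t−1} ≠ 0 for all t) and converges, with limit −min(√r, 1/√r); that is, the limit is −1/√r when r ≥ 1 and −√r when r ≤ 1. -/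
open Filter Function Set Topology

/-!
Write `c = m + m⁻¹` with `m = min (√r) (1/√r) ≤ 1`. The identity
`x (c + x) + 1 = (x + m)(x + m⁻¹)` shows that the fixed points of `x ↦ -1/(c + x)` are `-m` and
`-m⁻¹`, and that on `[-m, 0]`, where both factors are nonnegative, the map does not increase `x`.
Since the map also sends `[-m, 0]` into itself, the sequence decreases from `0` to a fixed point
in `[-m, 0]`, which can only be `-m`.
-/

noncomputable def momentumStep (m x : ℝ) : ℝ := -1 / (m + m⁻¹ + x)

theorem mul_add_add_inv_add_one {a : ℝ} (ha : a ≠ 0) (x : ℝ) :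
    x * (a + a⁻¹ + x) + 1 = (x + a) * (x + a⁻¹) := by
  field_simp
  ring

theorem isFixedPt_momentumStep_iff {a : ℝ} (ha : 0 < a) (x : ℝ) :
    IsFixedPt (momentumStep a) x ↔ x = -a ∨ x = -a⁻¹ := by
  have ha' := inv_pos.2 ha
  rcases eq_or_ne (a + a⁻¹ + x) 0 with hx | hx
  · -- `-1 / 0 = 0`, and `x = -(a + a⁻¹)` is neither `0` nor a root
    have : x < -a ∧ x < -a⁻¹ := by constructor <;> linarith
    simp only [IsFixedPt, momentumStep, hx, div_zero, this.1.ne, this.2.ne, or_self, iff_false]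
    linarith
  · rw [IsFixedPt, momentumStep, eq_comm, eq_div_iff hx, eq_neg_iff_add_eq_zero,
      mul_add_add_inv_add_one ha.ne', mul_eq_zero, ← eq_neg_iff_add_eq_zero,
      ← eq_neg_iff_add_eq_zero]

section Dynamics

variable {m : ℝ}

theorem le_inv_self_of_le_one (hm : 0 < m) (hm₁ : m ≤ 1) : m ≤ m⁻¹ :=
  hm₁.trans ((one_le_inv₀ hm).2 hm₁)

theorem mapsTo_momentumStep (hm : 0 < m) : MapsTo (momentumStep m) (Icc (-m) 0) (Icc (-m) 0) := by
  intro x ⟨hmx, hx0⟩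
  have hm' := inv_pos.2 hm
  have hden : m⁻¹ ≤ m + m⁻¹ + x := by linarith
  have hinv : 1 / (m + m⁻¹ + x) ≤ m := by
    simpa using one_div_le_one_div_of_le hm' hden
  have hpos : 0 < 1 / (m + m⁻¹ + x) := one_div_pos.2 (hm'.trans_le hden)
  rw [momentumStep, neg_div]
  constructor <;> linarith

theorem momentumStep_le_self (hm : 0 < m) (hm₁ : m ≤ 1) {x : ℝ} (hx : x ∈ Icc (-m) 0) :
    momentumStep m x ≤ x := by
  have hm_le_inv := le_inv_self_of_le_one hm hm₁
  have hden : 0 < m + m⁻¹ + x := by linarith [hx.1]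
  rw [momentumStep, div_le_iff₀ hden, ← sub_nonneg, sub_neg_eq_add,
    mul_add_add_inv_add_one hm.ne']
  exact mul_nonneg (by linarith [hx.1]) (by linarith [hx.1])

theorem continuousAt_momentumStep {x : ℝ} (hx : m + m⁻¹ + x ≠ 0) :
    ContinuousAt (momentumStep m) x :=
  continuousAt_const.div (continuousAt_const.add continuousAt_id) hx

theorem antitone_iterate_momentumStep (hm : 0 < m) (hm₁ : m ≤ 1) {x : ℝ} (hx : x ∈ Icc (-m) 0) :
    Antitone fun n ↦ (momentumStep m)^[n] x :=
  antitone_nat_of_succ_le fun n ↦ by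
    rw [iterate_succ_apply']
    exact momentumStep_le_self hm hm₁ ((mapsTo_momentumStep hm).iterate n hx)

theorem tendsto_iterate_momentumStep (hm : 0 < m) (hm₁ : m ≤ 1) {x : ℝ} (hx : x ∈ Icc (-m) 0) :
    Tendsto (fun n ↦ (momentumStep m)^[n] x) atTop (𝓝 (-m)) := by
  have hmem : ∀ n, (momentumStep m)^[n] x ∈ Icc (-m) 0 := fun n ↦
    (mapsTo_momentumStep hm).iterate n hx
  have hlim := tendsto_atTop_ciInf (antitone_iterate_momentumStep hm hm₁ hx)
    ⟨-m, forall_mem_range.2 fun n ↦ (hmem n).1⟩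
  set L := ⨅ n, (momentumStep m)^[n] x
  have hL : L ∈ Icc (-m) 0 := isClosed_Icc.mem_of_tendsto hlim (Eventually.of_forall hmem)
  have hden : m + m⁻¹ + L ≠ 0 := by linarith [hL.1, inv_pos.2 hm]
  have hm_le_inv := le_inv_self_of_le_one hm hm₁
  have hLm : L = -m := by
    rcases (isFixedPt_momentumStep_iff hm L).1
        (isFixedPt_of_tendsto_iterate hlim (continuousAt_momentumStep hden)) with h | h
    · exact h
    · linarith [hL.1]
  rwa [← hLm]

end Dynamics

theorem min_add_inv_min {a : ℝ} : min a a⁻¹ + (min a a⁻¹)⁻¹ = a + a⁻¹ := by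
  rcases min_choice a a⁻¹ with h | h <;> rw [h]
  rw [inv_inv, add_comm]

theorem min_inv_le_one (a : ℝ) : min a a⁻¹ ≤ 1 := by
  rcases le_total a 1 with h | h
  · exact min_le_of_left_le h
  · exact min_le_of_right_le (inv_le_one_of_one_le₀ h)

/-- Let `r > 0`, `c = (1 + r)/√r`, `δ₀ = 0` and `δ_t = −1/(c + δ_{t−1})`. Then:
(i) the fixed-point equation `δ = −1/(c + δ)` has exactly the solutions
`δ = −√r` and `δ = −1/√r`; (ii) the sequence is well defined
(`c + δ_t ≠ 0` for all `t`) and converges to `−min(√r, 1/√r)`, i.e. to `−1/√r`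
when `r ≥ 1` and to `−√r` when `r ≤ 1`. -/
theorem mp_momentum_coefficients_limit
    (r : ℝ) (hr : 0 < r) (c : ℝ) (hc : c = (1 + r) / Real.sqrt r)
    (δ : ℕ → ℝ) (hδ0 : δ 0 = 0)
    (hrec : ∀ t : ℕ, 1 ≤ t → δ t = -1 / (c + δ (t - 1))) :
    (∀ x : ℝ, x = -1 / (c + x) ↔ (x = -Real.sqrt r ∨ x = -1 / Real.sqrt r)) ∧
    (∀ t : ℕ, c + δ t ≠ 0) ∧
    Tendsto δ atTop (nhds (-(min (Real.sqrt r) (1 / Real.sqrt r)))) := by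
  set s := Real.sqrt r
  set m := min s s⁻¹
  have hs : 0 < s := Real.sqrt_pos.2 hr
  have hm : 0 < m := lt_min hs (inv_pos.2 hs)
  have hcs : c = s + s⁻¹ := by
    rw [hc, ← Real.mul_self_sqrt hr.le]
    field_simp
    ring
  have hcm : c = m + m⁻¹ := hcs.trans min_add_inv_min.symm
  have hδ : δ = fun n ↦ (momentumStep m)^[n] 0 := by
    funext n
    induction n with
    | zero => rw [hδ0, iterate_zero_apply]
    | succ n ih => rw [hrec (n + 1) n.succ_pos, iterate_succ_apply', ← ih, hcm, momentumStep,
        Nat.add_sub_cancel]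
  have h0 : (0 : ℝ) ∈ Icc (-m) 0 := ⟨neg_nonpos.2 hm.le, le_rfl⟩
  refine ⟨fun x ↦ ?_, fun t ↦ ?_, ?_⟩
  · rw [show -1 / s = -s⁻¹ by ring, ← isFixedPt_momentumStep_iff hs, hcs]
    exact eq_comm
  · have ht := (mapsTo_momentumStep hm).iterate t h0
    rw [hcm, hδ]
    linarith [ht.1, inv_pos.2 hm]
  · rw [one_div, hδ]
    exact tendsto_iterate_momentumStep hm (min_inv_le_one s) h0
end
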